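/- Cascade lemma: Let M₁ be uniform on [1:2ⁿ], let (E₁,D₁) and (E₂,D₂) be ciphers with independent keys K₁, K₂ (also independent of M₁), set M₂ = E₁(K₁,M₁) and C = E₂(K₂,M₂). Then ρ_m(M₁; C) ≤ ρ_m(M₁; M₂) · ρ_m(M₂; C). -/

import Mathlib

open BigOperators Finset
open scoped Classical

/-- Hirschfeld–Gebelein–Rényi maximal correlation of a joint pmf `p` on `X × Y`:
the supremum of `E[f(X) g(Y)]` over zero-mean, unit-second-moment `f`, `g`
(`sSup ∅ = 0` if no such functions exist). -/
noncomputable def maxCorr {X Y : Type*} [Fintype X] [Fintype Y] (p : X → Y → ℝ) : ℝ :=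
  sSup {r : ℝ | ∃ f : X → ℝ, ∃ g : Y → ℝ,
    (∑ x, ∑ y, p x y * f x) = 0 ∧
    (∑ x, ∑ y, p x y * g y) = 0 ∧
    (∑ x, ∑ y, p x y * (f x) ^ 2) = 1 ∧
    (∑ x, ∑ y, p x y * (g y) ^ 2) = 1 ∧
    r = ∑ x, ∑ y, p x y * f x * g y}

/-- Spectral (operator) norm of a real matrix. -/
noncomputable def specNorm {X Y : Type*} [Fintype X] [Fintype Y] (B : Matrix X Y ℝ) : ℝ :=
  sSup {r : ℝ | ∃ v : Y → ℝ, (∑ y, (v y) ^ 2) = 1 ∧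
    r = Real.sqrt (∑ x, (B.mulVec v x) ^ 2)}

/-!
Each joint law in the statement is `(1/N) W` for a doubly stochastic matrix `W`, the transition
matrix of the cipher for a uniform key, and the cascade's matrix is the product `A * B` (the Markov
chain `M₁ → M₂ → C`). Rescaling zero-mean vectors into Rényi's admissible pairs gives
`⟪u, W v⟫ ≤ ρ(W) ‖u‖ ‖v‖`; with `u = W v` this yields `‖W v‖ ≤ ρ(W) ‖v‖`. Hence
`⟪f, A B g⟫ ≤ ρ(A) ‖f‖ ‖B g‖ ≤ ρ(A) ρ(B) ‖f‖ ‖g‖`.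
-/

open Matrix

section MaxCorr

variable {X Y : Type*} [Fintype X] [Fintype Y] {p : X → Y → ℝ} {r : ℝ}

def corrSet (p : X → Y → ℝ) : Set ℝ :=
  {r : ℝ | ∃ f : X → ℝ, ∃ g : Y → ℝ,
    (∑ x, ∑ y, p x y * f x) = 0 ∧
    (∑ x, ∑ y, p x y * g y) = 0 ∧
    (∑ x, ∑ y, p x y * (f x) ^ 2) = 1 ∧
    (∑ x, ∑ y, p x y * (g y) ^ 2) = 1 ∧
    r = ∑ x, ∑ y, p x y * f x * g y}

theorem maxCorr_eq_sSup_corrSet (p : X → Y → ℝ) : maxCorr p = sSup (corrSet p) := rfl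

theorem le_one_of_mem_corrSet (hp : ∀ x y, 0 ≤ p x y) (hr : r ∈ corrSet p) : r ≤ 1 := by
  obtain ⟨f, g, -, -, hf2, hg2, rfl⟩ := hr
  calc ∑ x, ∑ y, p x y * f x * g y
      ≤ ∑ x, ∑ y, (p x y * f x ^ 2 + p x y * g y ^ 2) / 2 := by
        gcongr with x _ y _
        nlinarith [mul_nonneg (hp x y) (sq_nonneg (f x - g y))]
    _ = 1 := by
        simp only [← Finset.sum_div, Finset.sum_add_distrib, hf2, hg2]
        norm_num

theorem bddAbove_corrSet (hp : ∀ x y, 0 ≤ p x y) : BddAbove (corrSet p) :=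
  ⟨1, fun _ hr => le_one_of_mem_corrSet hp hr⟩

theorem neg_mem_corrSet (hr : r ∈ corrSet p) : -r ∈ corrSet p := by
  obtain ⟨f, g, hf0, hg0, hf2, hg2, rfl⟩ := hr
  refine ⟨f, -g, hf0, ?_, hf2, ?_, ?_⟩ <;>
    simp [hg0, hg2, Finset.sum_neg_distrib]

theorem maxCorr_nonneg (p : X → Y → ℝ) : 0 ≤ maxCorr p := by
  rw [maxCorr_eq_sSup_corrSet]
  by_cases hbdd : BddAbove (corrSet p)
  · rcases (corrSet p).eq_empty_or_nonempty with hempty | ⟨r, hr⟩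
    · rw [hempty, Real.sSup_empty]
    · have := le_csSup hbdd hr
      have := le_csSup hbdd (neg_mem_corrSet hr)
      linarith
  · rw [Real.sSup_of_not_bddAbove hbdd]

end MaxCorr

section UniformJoint

variable {X : Type*} [Fintype X] {W : Matrix X X ℝ}

/-- The joint law of `(x, y)` when `x` is uniform on `X` and `y` is drawn from the channel `W`
with input `x`. -/
noncomputable def uniformJoint (W : Matrix X X ℝ) : X → X → ℝ :=
  fun x y => (Fintype.card X : ℝ)⁻¹ * W x y

theorem sum_sum_uniformJoint_mul_mul (W : Matrix X X ℝ) (f g : X → ℝ) :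
    ∑ x, ∑ y, uniformJoint W x y * f x * g y = (Fintype.card X : ℝ)⁻¹ * (f ⬝ᵥ W *ᵥ g) := by
  simp only [uniformJoint, dotProduct, mulVec, Finset.mul_sum]
  exact Finset.sum_congr rfl fun x _ => Finset.sum_congr rfl fun y _ => by ring

variable [DecidableEq X]

theorem uniformJoint_nonneg (hW : W ∈ doublyStochastic ℝ X) (x y : X) :
    0 ≤ uniformJoint W x y :=
  mul_nonneg (by positivity) (nonneg_of_mem_doublyStochastic hW)

theorem sum_sum_uniformJoint_mul_left (hW : W ∈ doublyStochastic ℝ X) (f : X → ℝ) :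
    ∑ x, ∑ y, uniformJoint W x y * f x = (Fintype.card X : ℝ)⁻¹ * ∑ x, f x := by
  simp only [uniformJoint, mul_assoc, ← Finset.mul_sum, ← Finset.sum_mul,
    sum_row_of_mem_doublyStochastic hW, one_mul]

theorem sum_sum_uniformJoint_mul_right (hW : W ∈ doublyStochastic ℝ X) (g : X → ℝ) :
    ∑ x, ∑ y, uniformJoint W x y * g y = (Fintype.card X : ℝ)⁻¹ * ∑ y, g y := by
  rw [Finset.sum_comm]
  simp only [uniformJoint, mul_assoc, ← Finset.mul_sum, ← Finset.sum_mul,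
    sum_col_of_mem_doublyStochastic hW, one_mul]

theorem mem_corrSet_uniformJoint_iff [Nonempty X] (hW : W ∈ doublyStochastic ℝ X) {r : ℝ} :
    r ∈ corrSet (uniformJoint W) ↔ ∃ f g : X → ℝ, ∑ x, f x = 0 ∧ ∑ x, g x = 0 ∧
      f ⬝ᵥ f = Fintype.card X ∧ g ⬝ᵥ g = Fintype.card X ∧
      r = (Fintype.card X : ℝ)⁻¹ * (f ⬝ᵥ W *ᵥ g) := by
  have hN : (Fintype.card X : ℝ) ≠ 0 := by positivity
  simp only [corrSet, Set.mem_ofPred_eq, sum_sum_uniformJoint_mul_left hW,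
    sum_sum_uniformJoint_mul_right hW, sum_sum_uniformJoint_mul_mul, dotProduct, ← sq,
    mul_eq_zero, inv_eq_zero, hN, false_or, inv_mul_eq_one₀ hN, eq_comm (a := (Fintype.card X : ℝ))]

theorem dotProduct_mulVec_le_maxCorr_mul (hW : W ∈ doublyStochastic ℝ X) {u v : X → ℝ}
    (hu : ∑ x, u x = 0) (hv : ∑ x, v x = 0) :
    u ⬝ᵥ W *ᵥ v ≤ maxCorr (uniformJoint W) * (√(u ⬝ᵥ u) * √(v ⬝ᵥ v)) := by
  rcases eq_or_ne u 0 with rfl | hu0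
  · simp
  rcases eq_or_ne v 0 with rfl | hv0
  · simp
  have : Nonempty X := by
    obtain ⟨x, -⟩ := Function.ne_iff.mp hu0
    exact ⟨x⟩
  set N : ℝ := (Fintype.card X : ℝ)
  have hN : 0 < N := by positivity
  have huu : 0 < u ⬝ᵥ u := by simpa using dotProduct_self_star_pos_iff.mpr hu0
  have hvv : 0 < v ⬝ᵥ v := by simpa using dotProduct_self_star_pos_iff.mpr hv0
  -- rescale `u`, `v` to the unit second moments required in `corrSet`
  set a := √N / √(u ⬝ᵥ u)
  set b := √N / √(v ⬝ᵥ v)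
  have hmem : N⁻¹ * ((a • u) ⬝ᵥ W *ᵥ (b • v)) ∈ corrSet (uniformJoint W) := by
    refine (mem_corrSet_uniformJoint_iff hW).mpr ⟨a • u, b • v, ?_, ?_, ?_, ?_, rfl⟩
    · simp [← Finset.mul_sum, hu]
    · simp [← Finset.mul_sum, hv]
    · simp only [smul_dotProduct, dotProduct_smul, smul_eq_mul, a]
      field_simp
      rw [Real.sq_sqrt hN.le, Real.sq_sqrt huu.le, mul_comm]
    · simp only [smul_dotProduct, dotProduct_smul, smul_eq_mul, b]
      field_simp
      rw [Real.sq_sqrt hN.le, Real.sq_sqrt hvv.le, mul_comm]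
  have hcorr : N⁻¹ * ((a • u) ⬝ᵥ W *ᵥ (b • v)) = u ⬝ᵥ W *ᵥ v / (√(u ⬝ᵥ u) * √(v ⬝ᵥ v)) := by
    simp only [mulVec_smul, smul_dotProduct, dotProduct_smul, smul_eq_mul, a, b]
    field_simp
    rw [Real.sq_sqrt hN.le]
  rw [← div_le_iff₀ (by positivity), ← hcorr]
  exact le_csSup (bddAbove_corrSet (uniformJoint_nonneg hW)) hmem

theorem sqrt_mulVec_dotProduct_le_maxCorr_mul (hW : W ∈ doublyStochastic ℝ X) {v : X → ℝ}
    (hv : ∑ x, v x = 0) :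
    √((W *ᵥ v) ⬝ᵥ (W *ᵥ v)) ≤ maxCorr (uniformJoint W) * √(v ⬝ᵥ v) := by
  have hWv : ∑ x, (W *ᵥ v) x = 0 := (sum_mulVec_of_mem_doublyStochastic hW).trans hv
  have hle := dotProduct_mulVec_le_maxCorr_mul hW hWv hv
  have hnn : 0 ≤ (W *ᵥ v) ⬝ᵥ (W *ᵥ v) := by simpa using dotProduct_self_star_nonneg (W *ᵥ v)
  have hρv := mul_nonneg (maxCorr_nonneg (uniformJoint W)) (Real.sqrt_nonneg (v ⬝ᵥ v))
  nlinarith [Real.mul_self_sqrt hnn, Real.sqrt_nonneg ((W *ᵥ v) ⬝ᵥ (W *ᵥ v))]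

theorem maxCorr_uniformJoint_mul_le [Nonempty X] {A B : Matrix X X ℝ}
    (hA : A ∈ doublyStochastic ℝ X) (hB : B ∈ doublyStochastic ℝ X) :
    maxCorr (uniformJoint (A * B)) ≤ maxCorr (uniformJoint A) * maxCorr (uniformJoint B) := by
  have hρA := maxCorr_nonneg (uniformJoint A)
  refine Real.sSup_le (fun r hr => ?_) (mul_nonneg hρA (maxCorr_nonneg _))
  obtain ⟨f, g, hf, hg, hff, hgg, rfl⟩ := (mem_corrSet_uniformJoint_iff (mul_mem hA hB)).mp hr
  have hBg : ∑ x, (B *ᵥ g) x = 0 := (sum_mulVec_of_mem_doublyStochastic hB).trans hg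
  calc (Fintype.card X : ℝ)⁻¹ * (f ⬝ᵥ (A * B) *ᵥ g)
      = (Fintype.card X : ℝ)⁻¹ * (f ⬝ᵥ A *ᵥ B *ᵥ g) := by rw [mulVec_mulVec]
    _ ≤ (Fintype.card X : ℝ)⁻¹ *
          (maxCorr (uniformJoint A) * (√(f ⬝ᵥ f) * √((B *ᵥ g) ⬝ᵥ (B *ᵥ g)))) := by
        gcongr
        exact dotProduct_mulVec_le_maxCorr_mul hA hf hBg
    _ ≤ (Fintype.card X : ℝ)⁻¹ *
          (maxCorr (uniformJoint A) * (√(f ⬝ᵥ f) * (maxCorr (uniformJoint B) * √(g ⬝ᵥ g)))) := by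
        gcongr
        exact sqrt_mulVec_dotProduct_le_maxCorr_mul hB hg
    _ = maxCorr (uniformJoint A) * maxCorr (uniformJoint B) := by
        rw [hff, hgg]
        field_simp
        rw [Real.sq_sqrt (by positivity)]
        ring

end UniformJoint

section Cipher

variable {K X : Type*} [Fintype K] [DecidableEq X]

/-- `cipherChannel E m c` is the probability that `E k m = c` for a uniformly random key `k`. -/
noncomputable def cipherChannel (E : K → X → X) : Matrix X X ℝ :=
  Matrix.of fun m c => (Fintype.card K : ℝ)⁻¹ * #{k | E k m = c}

theorem cipherChannel_apply (E : K → X → X) (m c : X) :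
    cipherChannel E m c = (Fintype.card K : ℝ)⁻¹ * ∑ k, if E k m = c then 1 else 0 := by
  rw [cipherChannel, of_apply, natCast_card_filter]

variable [Fintype X]

theorem cipherChannel_mem_doublyStochastic [Nonempty K] {E : K → X → X}
    (hE : ∀ k, Function.Injective (E k)) : cipherChannel E ∈ doublyStochastic ℝ X := by
  have hK : (Fintype.card K : ℝ) ≠ 0 := by positivity
  refine mem_doublyStochastic_iff_sum.mpr ⟨fun m c => by rw [cipherChannel, of_apply]; positivity,
    fun m => ?_, fun c => ?_⟩
  · simp only [cipherChannel_apply, ← Finset.mul_sum]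
    rw [Finset.sum_comm]
    simp [hK]
  · simp only [cipherChannel_apply, ← Finset.mul_sum]
    have hfiber : ∀ k, ∑ m, (if E k m = c then (1 : ℝ) else 0) = 1 := fun k => by
      rw [Fintype.sum_bijective (E k) (Finite.injective_iff_bijective.mp (hE k)) _
        (fun b => if b = c then (1 : ℝ) else 0) fun _ => rfl]
      simp
    rw [Finset.sum_comm]
    simp [hfiber, hK]

theorem cipherChannel_prod {K' : Type*} [Fintype K'] (E₁ : K → X → X) (E₂ : K' → X → X) :
    cipherChannel (fun k : K × K' => E₂ k.2 ∘ E₁ k.1) = cipherChannel E₁ * cipherChannel E₂ := by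
  ext m c
  simp only [cipherChannel_apply, mul_apply, Fintype.card_prod, Nat.cast_mul, mul_inv,
    Fintype.sum_prod_type, Function.comp_apply]
  simp_rw [mul_assoc, Finset.sum_mul, Finset.mul_sum, ite_mul, one_mul, zero_mul, mul_ite, mul_zero]
  conv_rhs => rw [Finset.sum_comm]
  simp

end Cipher

theorem stmt8 (n : ℕ) {K1 K2 : Type*} [Fintype K1] [Fintype K2] [Nonempty K1] [Nonempty K2]
    (E1 : K1 → Fin (2 ^ n) → Fin (2 ^ n)) (D1 : K1 → Fin (2 ^ n) → Fin (2 ^ n))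
    (hD1 : ∀ k m, D1 k (E1 k m) = m)
    (E2 : K2 → Fin (2 ^ n) → Fin (2 ^ n)) (D2 : K2 → Fin (2 ^ n) → Fin (2 ^ n))
    (hD2 : ∀ k m, D2 k (E2 k m) = m) :
    maxCorr (fun (m c : Fin (2 ^ n)) =>
        ((2 ^ n : ℝ))⁻¹ * ((Fintype.card K1 : ℝ))⁻¹ * ((Fintype.card K2 : ℝ))⁻¹ *
          ((univ.filter fun kk : K1 × K2 => E2 kk.2 (E1 kk.1 m) = c).card : ℝ)) ≤
    maxCorr (fun (m c : Fin (2 ^ n)) =>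
        ((2 ^ n : ℝ))⁻¹ * ((Fintype.card K1 : ℝ))⁻¹ *
          ((univ.filter fun k => E1 k m = c).card : ℝ)) *
    maxCorr (fun (m c : Fin (2 ^ n)) =>
        ((2 ^ n : ℝ))⁻¹ * ((Fintype.card K2 : ℝ))⁻¹ *
          ((univ.filter fun k => E2 k m = c).card : ℝ)) := by
  have hE1 : ∀ k, Function.Injective (E1 k) := fun k => Function.LeftInverse.injective (hD1 k)
  have hE2 : ∀ k, Function.Injective (E2 k) := fun k => Function.LeftInverse.injective (hD2 k)
  have hcascade := maxCorr_uniformJoint_mul_le (cipherChannel_mem_doublyStochastic hE1)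
    (cipherChannel_mem_doublyStochastic hE2)
  rw [← cipherChannel_prod] at hcascade
  convert hcascade using 3 <;> ext <;> simp [uniformJoint, cipherChannel] <;> ring
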